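/- Every closed hyperplane X = ker f of c₀ (with f ∈ c₀* nonzero) admits an Auerbach basis: a biorthogonal system (xₙ; xₙ*)_{n≥1} with xₙ ∈ X, xₙ* ∈ X*, ‖xₙ‖ = ‖xₙ*‖ = 1 for all n, which is fundamental (the closed span of {xₙ} is X) and total (xₙ*(y) = 0 for all n implies y = 0). -/

import Mathlib

open ZeroAtInftyContinuousMap Filter
open scoped ZeroAtInfty

/-- The `k`-th standard unit vector `e_k` in `c₀` (indices starting at `0`). -/
noncomputable def e (k : ℕ) : C₀(ℕ, ℝ) where
  toFun := Pi.single k 1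
  zero_at_infty' := by
    refine Filter.Tendsto.congr' ?_ tendsto_const_nhds
    have h : {k}ᶜ ∈ Filter.cocompact ℕ := by
      rw [Filter.cocompact_eq_cofinite]
      simp [Filter.mem_cofinite]
    filter_upwards [h] with n hn
    simp only [Set.mem_compl_iff, Set.mem_singleton_iff] at hn
    simp [Pi.single_apply, hn]

/-- The `k`-th coordinate functional `e_k^*` on `c₀`. -/
noncomputable def coord (k : ℕ) : C₀(ℕ, ℝ) →L[ℝ] ℝ :=
  LinearMap.mkContinuous
    { toFun := fun y => y k
      map_add' := by intros; rfl
      map_smul' := by intros; rfl }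
    1
    (fun y => by simpa using y.toBCF.norm_coe_le_norm k)

/-- The functional `f = ∑ₙ aₙ eₙ^* ∈ ℓ¹ = c₀^*` determined by a (summable) coefficient
sequence `a`. -/
noncomputable def funcOf (a : ℕ → ℝ) : C₀(ℕ, ℝ) →L[ℝ] ℝ := ∑' n : ℕ, a n • coord n

/-- The vectors `xₙ = e_{n+1} - (a_{n+1}/a₀) • e₀` (here `a₀` plays the role of the
coefficient of maximal absolute value, i.e. the paper's `a₁`). -/
noncomputable def xvec (a : ℕ → ℝ) (n : ℕ) : C₀(ℕ, ℝ) :=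
  e (n + 1) - (a (n + 1) / a 0) • e 0

/-- An Auerbach basis of a normed space: a biorthogonal system of norm-one vectors and
norm-one functionals which is fundamental (the closed linear span of the vectors is the
whole space) and total (the functionals separate points). -/
structure IsAuerbachBasis {X : Type*} [NormedAddCommGroup X] [NormedSpace ℝ X]
    {ι : Type*} (x : ι → X) (f : ι → X →L[ℝ] ℝ) : Prop where
  biorth_eq : ∀ k, f k (x k) = 1
  biorth_ne : ∀ k j, k ≠ j → f k (x j) = 0
  norm_vec : ∀ n, ‖x n‖ = 1
  norm_fun : ∀ n, ‖f n‖ = 1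
  fundamental : (Submodule.span ℝ (Set.range x)).topologicalClosure = ⊤
  total : ∀ y, (∀ n, f n y = 0) → y = 0

/-!
Write `aₙ = f eₙ`. Testing `f` on sign vectors gives `∑ |aₙ| ≤ ‖f‖`, so `aₙ → 0` and `|aₙ|`
attains its maximum at some `k` with `a_k ≠ 0`. For `m ≠ k` the vectors
`x_m = e_m - (a_m / a_k) e_k` lie in `ker f` and have norm `max 1 |a_m / a_k| = 1`; the coordinate
functionals `e_m^*` restricted to `ker f` have norm at most `1` and are biorthogonal to them. They
are total because an element of `ker f` vanishing off `k` is a multiple of `e_k`, and fundamental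
because `x_m` is the image of `e_m` under the projection `y ↦ y - (f y / a_k) e_k` of `c₀` onto
`ker f`, which kills `e_k`. Finally `ℕ ∖ {k}` is reindexed by `ℕ`.
-/

open Topology

section ZeroAtInfty

variable {α β : Type*} [TopologicalSpace α] [SeminormedAddCommGroup β]

theorem ZeroAtInftyContinuousMap.norm_apply_le_norm (y : C₀(α, β)) (x : α) : ‖y x‖ ≤ ‖y‖ := by
  simpa using y.toBCF.norm_coe_le_norm x

theorem ZeroAtInftyContinuousMap.norm_le_of_forall_le {y : C₀(α, β)} {C : ℝ} (hC : 0 ≤ C)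
    (h : ∀ x, ‖y x‖ ≤ C) : ‖y‖ ≤ C := by
  rw [← norm_toBCF_eq_norm]
  exact (BoundedContinuousFunction.norm_le hC).2 h

end ZeroAtInfty

theorem exists_ne_zero_forall_norm_le_of_tendsto_cofinite {ι E : Type*} [NormedAddCommGroup E]
    {a : ι → E} (ha : Tendsto a cofinite (𝓝 0)) {i : ι} (hi : a i ≠ 0) :
    ∃ k, a k ≠ 0 ∧ ∀ m, ‖a m‖ ≤ ‖a k‖ := by
  have hfin : {m | ‖a i‖ ≤ ‖a m‖}.Finite := by
    simpa using eventually_cofinite.1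
      ((tendsto_norm_zero.comp ha).eventually (gt_mem_nhds (norm_pos_iff.2 hi)))
  obtain ⟨k, hik, hk⟩ := Set.exists_max_image _ (fun m => ‖a m‖) hfin ⟨i, le_refl ‖a i‖⟩
  refine ⟨k, norm_pos_iff.1 ((norm_pos_iff.2 hi).trans_le hik), fun m => ?_⟩
  by_cases hm : ‖a i‖ ≤ ‖a m‖
  · exact hk m hm
  · exact (not_le.1 hm).le.trans hik

theorem e_apply (k m : ℕ) : e k m = if m = k then 1 else 0 := by
  simp [e, Pi.single_apply]

theorem coord_apply (k : ℕ) (y : C₀(ℕ, ℝ)) : coord k y = y k := rfl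

theorem sum_smul_e_apply (s : Finset ℕ) (c : ℕ → ℝ) (m : ℕ) :
    (∑ n ∈ s, c n • e n) m = if m ∈ s then c m else 0 := by
  rw [← coord_apply, map_sum]
  simp [coord_apply, e_apply]

theorem hasSum_smul_e (y : C₀(ℕ, ℝ)) : HasSum (fun n => y n • e n) y := by
  rw [HasSum, SummationFilter.unconditional_filter,
    Metric.nhds_basis_closedBall.tendsto_right_iff]
  intro ε hε
  have hfin : {n | ε < |y n|}.Finite := by
    have hy : Tendsto y cofinite (𝓝 0) := cocompact_eq_cofinite ℕ ▸ zero_at_infty y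
    simpa using eventually_cofinite.1 ((tendsto_norm_zero.comp hy).eventually (ge_mem_nhds hε))
  filter_upwards [eventually_ge_atTop hfin.toFinset] with s hs
  rw [Metric.mem_closedBall, dist_eq_norm]
  refine norm_le_of_forall_le hε.le fun m => ?_
  rw [ZeroAtInftyContinuousMap.sub_apply, sum_smul_e_apply, Real.norm_eq_abs]
  split_ifs with hm
  · simpa using hε.le
  · simpa using fun h => hm (hs (hfin.mem_toFinset.2 h))

theorem topologicalClosure_span_range_e :
    (Submodule.span ℝ (Set.range e)).topologicalClosure = ⊤ := by
  refine eq_top_iff.2 fun y _ => ?_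
  rw [← SetLike.mem_coe, Submodule.topologicalClosure_coe]
  exact mem_closure_of_tendsto (hasSum_smul_e y) (Eventually.of_forall fun s =>
    Submodule.sum_mem _ fun n _ => Submodule.smul_mem _ _ (Submodule.subset_span ⟨n, rfl⟩))

theorem sum_abs_apply_e_le_norm (f : C₀(ℕ, ℝ) →L[ℝ] ℝ) (s : Finset ℕ) :
    ∑ n ∈ s, |f (e n)| ≤ ‖f‖ := by
  set v := ∑ n ∈ s, (SignType.sign (f (e n)) : ℝ) • e n
  have hv : ‖v‖ ≤ 1 := by
    refine norm_le_of_forall_le zero_le_one fun m => ?_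
    rw [sum_smul_e_apply]
    split_ifs
    · rcases lt_trichotomy (f (e m)) 0 with h | h | h <;> simp [h]
    · simp
  calc ∑ n ∈ s, |f (e n)| = f v := by simp [v, sign_mul_self]
    _ ≤ ‖f‖ * ‖v‖ := (le_abs_self _).trans (f.le_opNorm v)
    _ ≤ ‖f‖ := mul_le_of_le_one_right (norm_nonneg f) hv

theorem exists_apply_e_ne_zero_forall_abs_le {f : C₀(ℕ, ℝ) →L[ℝ] ℝ} (hf : f ≠ 0) :
    ∃ k, f (e k) ≠ 0 ∧ ∀ m, |f (e m)| ≤ |f (e k)| := by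
  have hsum : Summable fun n => |f (e n)| :=
    summable_of_sum_le (fun _ => abs_nonneg _) (sum_abs_apply_e_le_norm f)
  obtain ⟨i, hi⟩ : ∃ i, f (e i) ≠ 0 := by
    by_contra! h
    exact hf (ContinuousLinearMap.ext_on
      (Submodule.dense_iff_topologicalClosure_eq_top.2 topologicalClosure_span_range_e)
      (by rintro _ ⟨n, rfl⟩; simp [h n]))
  exact exists_ne_zero_forall_norm_le_of_tendsto_cofinite
    (summable_abs_iff.1 hsum).tendsto_cofinite_zero hi

section NormedSpace

variable {X : Type*} [NormedAddCommGroup X] [NormedSpace ℝ X] {ι : Type*}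

theorem IsAuerbachBasis.of_norm_apply_le [DecidableEq ι] {x : ι → X} {g : ι → X →L[ℝ] ℝ}
    (hbiorth : ∀ k j, g k (x j) = if k = j then 1 else 0) (hx : ∀ n, ‖x n‖ = 1)
    (hg : ∀ n z, ‖g n z‖ ≤ ‖z‖)
    (hfund : (Submodule.span ℝ (Set.range x)).topologicalClosure = ⊤)
    (htotal : ∀ y, (∀ n, g n y = 0) → y = 0) : IsAuerbachBasis x g where
  biorth_eq k := by simp [hbiorth]
  biorth_ne k j hkj := by simp [hbiorth, hkj]
  norm_vec := hx
  norm_fun n := le_antisymm ((g n).opNorm_le_bound zero_le_one fun z => by simpa using hg n z)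
    (by simpa [hbiorth, hx] using (g n).le_opNorm (x n))
  fundamental := hfund
  total := htotal

theorem IsAuerbachBasis.comp_equiv {ι' : Type*} {x : ι → X} {g : ι → X →L[ℝ] ℝ}
    (h : IsAuerbachBasis x g) (σ : ι' ≃ ι) : IsAuerbachBasis (x ∘ σ) (g ∘ σ) where
  biorth_eq k := h.biorth_eq (σ k)
  biorth_ne k j hkj := h.biorth_ne (σ k) (σ j) (σ.injective.ne hkj)
  norm_vec n := h.norm_vec (σ n)
  norm_fun n := h.norm_fun (σ n)
  fundamental := by rw [EquivLike.range_comp]; exact h.fundamental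
  total y hy := h.total y fun n => by simpa using hy (σ.symm n)

theorem topologicalClosure_span_range_eq_top_of_denseRange {E : Type*} [NormedAddCommGroup E]
    [NormedSpace ℝ E] {ι' : Type*} {P : E →L[ℝ] X} (hP : DenseRange P) {v : ι' → E}
    (hv : (Submodule.span ℝ (Set.range v)).topologicalClosure = ⊤) {x : ι → X}
    (hvx : ∀ i, P (v i) ∈ Submodule.span ℝ (Set.range x)) :
    (Submodule.span ℝ (Set.range x)).topologicalClosure = ⊤ := by
  refine eq_top_iff.2 ((hP.topologicalClosure_map_submodule hv).ge.trans
    (Submodule.topologicalClosure_mono ?_))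
  rw [Submodule.map_span, Submodule.span_le]
  rintro _ ⟨_, ⟨i, rfl⟩, rfl⟩
  exact hvx i

end NormedSpace

section Hyperplane

abbrev hyperplane (f : C₀(ℕ, ℝ) →L[ℝ] ℝ) : Submodule ℝ C₀(ℕ, ℝ) :=
  LinearMap.ker (f : C₀(ℕ, ℝ) →ₗ[ℝ] ℝ)

variable {f : C₀(ℕ, ℝ) →L[ℝ] ℝ} {k : ℕ}

noncomputable def hyperplaneProj (hk : f (e k) ≠ 0) : C₀(ℕ, ℝ) →L[ℝ] hyperplane f :=
  (ContinuousLinearMap.id ℝ _ - (f (e k))⁻¹ • f.smulRight (e k)).codRestrict _ fun y => by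
    simp [mul_comm (f y), inv_mul_cancel_left₀ hk]

theorem hyperplaneProj_apply (hk : f (e k) ≠ 0) (y : C₀(ℕ, ℝ)) :
    (hyperplaneProj hk y : C₀(ℕ, ℝ)) = y - (f y / f (e k)) • e k := by
  simp [hyperplaneProj, div_eq_inv_mul, mul_smul]

theorem hyperplaneProj_surjective (hk : f (e k) ≠ 0) : Function.Surjective (hyperplaneProj hk) :=
  fun y => ⟨y, Subtype.ext (by simp [hyperplaneProj_apply])⟩

theorem hyperplaneProj_e_self (hk : f (e k) ≠ 0) : hyperplaneProj hk (e k) = 0 :=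
  Subtype.ext (by simp [hyperplaneProj_apply, hk])

noncomputable def hyperplaneVec (hk : f (e k) ≠ 0) (m : {m // m ≠ k}) : hyperplane f :=
  hyperplaneProj hk (e m)

noncomputable def hyperplaneCoord (f : C₀(ℕ, ℝ) →L[ℝ] ℝ) (m : {m // m ≠ k}) :
    hyperplane f →L[ℝ] ℝ :=
  (coord m).comp (hyperplane f).subtypeL

theorem hyperplaneVec_apply (hk : f (e k) ≠ 0) (m : {m // m ≠ k}) (j : ℕ) :
    (hyperplaneVec hk m : C₀(ℕ, ℝ)) j =
      (if j = m then 1 else 0) - f (e m) / f (e k) * (if j = k then 1 else 0) := by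
  simp [hyperplaneVec, hyperplaneProj_apply, e_apply]

theorem hyperplaneCoord_apply (m : {m // m ≠ k}) (z : hyperplane f) :
    hyperplaneCoord f m z = (z : C₀(ℕ, ℝ)) m := rfl

theorem hyperplaneCoord_hyperplaneVec (hk : f (e k) ≠ 0) (m j : {m // m ≠ k}) :
    hyperplaneCoord f m (hyperplaneVec hk j) = if m = j then 1 else 0 := by
  simp [hyperplaneCoord_apply, hyperplaneVec_apply, m.2, Subtype.ext_iff]

theorem norm_hyperplaneVec (hk : f (e k) ≠ 0) (hmax : ∀ m, |f (e m)| ≤ |f (e k)|)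
    (m : {m // m ≠ k}) : ‖hyperplaneVec hk m‖ = 1 := by
  change ‖(hyperplaneVec hk m : C₀(ℕ, ℝ))‖ = 1
  refine le_antisymm (norm_le_of_forall_le zero_le_one fun j => ?_) ?_
  · rw [hyperplaneVec_apply, Real.norm_eq_abs]
    by_cases hjm : j = m
    · simp [hjm, m.2]
    · by_cases hjk : j = k
      · simpa [hjk, m.2.symm, abs_div, div_le_one (abs_pos.2 hk)] using hmax m
      · simp [hjm, hjk]
  · simpa [hyperplaneVec_apply, m.2] using norm_apply_le_norm (hyperplaneVec hk m : C₀(ℕ, ℝ)) m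

theorem norm_hyperplaneCoord_apply_le (m : {m // m ≠ k}) (z : hyperplane f) :
    ‖hyperplaneCoord f m z‖ ≤ ‖z‖ :=
  norm_apply_le_norm (z : C₀(ℕ, ℝ)) m

theorem eq_zero_of_forall_hyperplaneCoord_eq_zero (hk : f (e k) ≠ 0) (z : hyperplane f)
    (hz : ∀ m : {m // m ≠ k}, hyperplaneCoord f m z = 0) : z = 0 := by
  have hze : (z : C₀(ℕ, ℝ)) = (z : C₀(ℕ, ℝ)) k • e k := by
    ext j
    by_cases hjk : j = k
    · simp [hjk, e_apply]
    · simpa [e_apply, hjk, hyperplaneCoord_apply] using hz ⟨j, hjk⟩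
  have hzk : (z : C₀(ℕ, ℝ)) k = 0 := by
    have := LinearMap.mem_ker.1 z.2
    rw [ContinuousLinearMap.coe_coe, hze, map_smul, smul_eq_mul] at this
    exact (mul_eq_zero.1 this).resolve_right hk
  exact Subtype.ext (by rw [hze, hzk, zero_smul]; rfl)

-- Instance search finds neither `ContinuousAdd (hyperplane f)` nor the operator norm on its dual,
-- so the norms of the functionals and the density of the span go through the general lemmas above.
theorem isAuerbachBasis_hyperplane (hk : f (e k) ≠ 0) (hmax : ∀ m, |f (e m)| ≤ |f (e k)|) :
    IsAuerbachBasis (hyperplaneVec hk) (hyperplaneCoord f) := by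
  refine .of_norm_apply_le (hyperplaneCoord_hyperplaneVec hk) (norm_hyperplaneVec hk hmax)
    norm_hyperplaneCoord_apply_le ?_ (eq_zero_of_forall_hyperplaneCoord_eq_zero hk)
  refine topologicalClosure_span_range_eq_top_of_denseRange
    (hyperplaneProj_surjective hk).denseRange topologicalClosure_span_range_e fun m => ?_
  by_cases hm : m = k
  · simp [hm, hyperplaneProj_e_self]
  · exact Submodule.subset_span ⟨⟨m, hm⟩, rfl⟩

end Hyperplane

/-- Every closed hyperplane `X = ker f` of `c₀` (where `f` is a nonzero
continuous functional) admits an Auerbach basis. -/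
theorem stmt4 (f : C₀(ℕ, ℝ) →L[ℝ] ℝ) (hf : f ≠ 0) :
    ∃ (x : ℕ → LinearMap.ker (f : C₀(ℕ, ℝ) →ₗ[ℝ] ℝ))
      (g : ℕ → (LinearMap.ker (f : C₀(ℕ, ℝ) →ₗ[ℝ] ℝ) : Submodule ℝ C₀(ℕ, ℝ)) →L[ℝ] ℝ),
      IsAuerbachBasis x g := by
  obtain ⟨k, hk, hmax⟩ := exists_apply_e_ne_zero_forall_abs_le hf
  have : Infinite {m // m ≠ k} := (Set.finite_singleton k).infinite_compl.to_subtype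
  obtain ⟨σ⟩ : Nonempty (ℕ ≃ {m // m ≠ k}) := nonempty_equiv_of_countable
  exact ⟨_, _, (isAuerbachBasis_hyperplane hk hmax).comp_equiv σ⟩
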